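/- arXiv:2505.15504 — 2 statements merged into one kernel-verified Lean document; each statement's English description precedes it below -/
import Mathlib

section
/- Suppose that for all unit vectors u one has (1−ε)·uᵀ Xᵀ X u ≤ uᵀ Mᵀ Xᵀ X M u ≤ (1+ε)·uᵀ Xᵀ X u, with 0 < ε < 1 and X, M appropriately sized matrices with X M of full column rank. Then the condition number satisfies κ(XM)² ≤ ((1+ε)/(1−ε))·κ(X)². -/
open Matrix

/-- Squared Euclidean norm of a vector. -/
def vecNormSq {n : ℕ} (v : Fin n → ℝ) : ℝ := ∑ i, (v i) ^ 2

lemma vecNormSq_nonneg {n : ℕ} (v : Fin n → ℝ) : 0 ≤ vecNormSq v :=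
  Finset.sum_nonneg fun i _ => sq_nonneg _

lemma vecNormSq_pos {n : ℕ} {v : Fin n → ℝ} (hv : v ≠ 0) : 0 < vecNormSq v := by
  rcases (vecNormSq_nonneg v).lt_or_eq with h | h
  · exact h
  · exfalso; apply hv
    funext i
    have := (Finset.sum_eq_zero_iff_of_nonneg (fun i _ => sq_nonneg (v i))).mp h.symm i
      (Finset.mem_univ i)
    simpa using pow_eq_zero_iff (n := 2) (by norm_num) |>.mp this

/-- Squared condition number of a matrix, defined as the ratio of the supremum to the
infimum of `‖Au‖²` over unit vectors `u` (equals `λ_max(AᵀA)/λ_min(AᵀA)`). -/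
noncomputable def condNumSq {a b : ℕ} (A : Matrix (Fin a) (Fin b) ℝ) : ℝ :=
  sSup {x | ∃ u : Fin b → ℝ, vecNormSq u = 1 ∧ x = vecNormSq (A.mulVec u)} /
    sInf {x | ∃ u : Fin b → ℝ, vecNormSq u = 1 ∧ x = vecNormSq (A.mulVec u)}

lemma vecNormSq_continuous {n : ℕ} : Continuous (vecNormSq (n := n)) := by
  unfold vecNormSq
  exact continuous_finset_sum _ fun i _ => (continuous_apply i).pow 2

lemma sphere_compact {n : ℕ} : IsCompact {u : Fin n → ℝ | vecNormSq u = 1} := by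
  rw [Metric.isCompact_iff_isClosed_bounded]
  refine ⟨isClosed_eq vecNormSq_continuous continuous_const, ?_⟩
  apply Metric.isBounded_iff_subset_closedBall 0 |>.mpr
  refine ⟨1, fun u hu => ?_⟩
  simp only [Metric.mem_closedBall, dist_zero_right]
  rw [pi_norm_le_iff_of_nonneg zero_le_one]
  intro i
  rw [Real.norm_eq_abs, ← sq_le_one_iff_abs_le_one]
  calc (u i) ^ 2 ≤ ∑ j, (u j) ^ 2 :=
        Finset.single_le_sum (fun j _ => sq_nonneg (u j)) (Finset.mem_univ i)
    _ = 1 := hu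

lemma sphere_nonempty {n : ℕ} (hn : 0 < n) :
    {u : Fin n → ℝ | vecNormSq u = 1}.Nonempty := by
  refine ⟨Pi.single ⟨0, hn⟩ 1, ?_⟩
  simp only [Set.mem_setOf_eq, vecNormSq]
  rw [Finset.sum_eq_single ⟨0, hn⟩]
  · simp
  · intro j _ hj; rw [Pi.single_eq_of_ne hj]; ring
  · simp

lemma spec_mem {a b : ℕ} (A : Matrix (Fin a) (Fin b) ℝ) {u : Fin b → ℝ}
    (hu : vecNormSq u = 1) :
    vecNormSq (A.mulVec u) ∈
      {x | ∃ u : Fin b → ℝ, vecNormSq u = 1 ∧ x = vecNormSq (A.mulVec u)} :=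
  ⟨u, hu, rfl⟩

lemma spec_bddAbove {a b : ℕ} (A : Matrix (Fin a) (Fin b) ℝ) :
    BddAbove {x | ∃ u : Fin b → ℝ, vecNormSq u = 1 ∧ x = vecNormSq (A.mulVec u)} := by
  refine ⟨∑ i, ∑ j, (A i j) ^ 2, ?_⟩
  rintro x ⟨u, hu, rfl⟩
  unfold vecNormSq
  apply Finset.sum_le_sum
  intro i _
  calc (A.mulVec u i) ^ 2 = (∑ j, A i j * u j) ^ 2 := by rfl
    _ ≤ (∑ j, (A i j) ^ 2) * ∑ j, (u j) ^ 2 :=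
        Finset.sum_mul_sq_le_sq_mul_sq _ _ _
    _ = ∑ j, (A i j) ^ 2 := by rw [show (∑ j, (u j) ^ 2) = 1 from hu, mul_one]

lemma spec_bddBelow {a b : ℕ} (A : Matrix (Fin a) (Fin b) ℝ) :
    BddBelow {x | ∃ u : Fin b → ℝ, vecNormSq u = 1 ∧ x = vecNormSq (A.mulVec u)} := by
  refine ⟨0, ?_⟩
  rintro x ⟨u, hu, rfl⟩
  exact vecNormSq_nonneg _

lemma spec_sInf_pos {a b : ℕ} (hb : 0 < b) (A : Matrix (Fin a) (Fin b) ℝ)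
    (hinj : Function.Injective A.mulVec) :
    0 < sInf {x | ∃ u : Fin b → ℝ, vecNormSq u = 1 ∧ x = vecNormSq (A.mulVec u)} := by
  obtain ⟨u₀, hu₀, hmin⟩ := sphere_compact.exists_isMinOn (sphere_nonempty hb)
    ((vecNormSq_continuous.comp (A.mulVecLin.continuous_of_finiteDimensional)).continuousOn)
  have hu₀ne : u₀ ≠ 0 := by
    intro h
    rw [Set.mem_setOf_eq, h] at hu₀
    simp [vecNormSq] at hu₀
  have hpos : 0 < vecNormSq (A.mulVec u₀) := by
    apply vecNormSq_pos
    intro h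
    exact hu₀ne (hinj (h.trans (A.mulVec_zero).symm))
  refine lt_of_lt_of_le hpos ?_
  apply le_csInf ⟨_, spec_mem A hu₀⟩
  rintro x ⟨u, hu, rfl⟩
  exact hmin hu

/-- If `(1−ε)·‖Xu‖² ≤ ‖XMu‖² ≤ (1+ε)·‖Xu‖²` for all unit `u`, with
`0 < ε < 1` and `XM` of full column rank, then `κ(XM)² ≤ ((1+ε)/(1−ε))·κ(X)²`. -/
theorem cond_num_sq_bound (a d0 : ℕ) (hd0 : 0 < d0) (ε : ℝ) (hε0 : 0 < ε) (hε1 : ε < 1)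
    (X : Matrix (Fin a) (Fin d0) ℝ) (M : Matrix (Fin d0) (Fin d0) ℝ)
    (hrank : (X * M).rank = d0)
    (hbound : ∀ u : Fin d0 → ℝ, vecNormSq u = 1 →
      (1 - ε) * vecNormSq (X.mulVec u) ≤ vecNormSq ((X * M).mulVec u) ∧
        vecNormSq ((X * M).mulVec u) ≤ (1 + ε) * vecNormSq (X.mulVec u)) :
    condNumSq (X * M) ≤ ((1 + ε) / (1 - ε)) * condNumSq X := by
  unfold condNumSq
  -- injectivity of (X*M).mulVec
  have hinj : Function.Injective (X * M).mulVec := by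
    have h1 := LinearMap.finrank_range_add_finrank_ker (X * M).mulVecLin
    rw [Module.finrank_pi, Fintype.card_fin] at h1
    have h2 : Module.finrank ℝ (LinearMap.ker (X * M).mulVecLin) = 0 := by
      have hr : Module.finrank ℝ (LinearMap.range (X * M).mulVecLin) = d0 := hrank
      omega
    have h3 : LinearMap.ker (X * M).mulVecLin = ⊥ :=
      Submodule.finrank_eq_zero.mp h2
    have := LinearMap.ker_eq_bot.mp h3
    exact this
  set SXM := {x | ∃ u : Fin d0 → ℝ, vecNormSq u = 1 ∧ x = vecNormSq ((X*M).mulVec u)}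
  set SX := {x | ∃ u : Fin d0 → ℝ, vecNormSq u = 1 ∧ x = vecNormSq (X.mulVec u)}
  obtain ⟨u₁, hu₁⟩ := sphere_nonempty (n := d0) hd0
  have hε1' : (0:ℝ) < 1 - ε := by linarith
  have hε0' : (0:ℝ) < 1 + ε := by linarith
  have hpPos : 0 < sInf SXM := spec_sInf_pos hd0 (X * M) hinj
  -- sSup SX ≥ 0
  have hQ0 : 0 ≤ sSup SX :=
    le_trans (vecNormSq_nonneg (X.mulVec u₁)) (le_csSup (spec_bddAbove X) (spec_mem X hu₁))
  -- sup bound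
  have hP : sSup SXM ≤ (1 + ε) * sSup SX := by
    apply csSup_le ⟨_, spec_mem (X * M) hu₁⟩
    rintro x ⟨u, hu, rfl⟩
    calc vecNormSq ((X * M).mulVec u) ≤ (1 + ε) * vecNormSq (X.mulVec u) := (hbound u hu).2
      _ ≤ (1 + ε) * sSup SX := by
          apply mul_le_mul_of_nonneg_left (le_csSup (spec_bddAbove X) (spec_mem X hu))
            (le_of_lt hε0')
  -- inf bound
  have hp : (1 - ε) * sInf SX ≤ sInf SXM := by
    apply le_csInf ⟨_, spec_mem (X * M) hu₁⟩
    rintro x ⟨u, hu, rfl⟩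
    calc (1 - ε) * sInf SX ≤ (1 - ε) * vecNormSq (X.mulVec u) :=
          mul_le_mul_of_nonneg_left (csInf_le (spec_bddBelow X) (spec_mem X hu))
            (le_of_lt hε1')
      _ ≤ vecNormSq ((X * M).mulVec u) := (hbound u hu).1
  -- sInf SX > 0
  have hqPos : 0 < sInf SX := by
    have hq : sInf SXM / (1 + ε) ≤ sInf SX := by
      apply le_csInf ⟨_, spec_mem X hu₁⟩
      rintro x ⟨u, hu, rfl⟩
      rw [div_le_iff₀ hε0']
      calc sInf SXM ≤ vecNormSq ((X * M).mulVec u) :=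
            csInf_le (spec_bddBelow (X * M)) (spec_mem (X * M) hu)
        _ ≤ (1 + ε) * vecNormSq (X.mulVec u) := (hbound u hu).2
        _ = vecNormSq (X.mulVec u) * (1 + ε) := mul_comm _ _
    exact lt_of_lt_of_le (div_pos hpPos hε0') hq
  calc sSup SXM / sInf SXM ≤ ((1 + ε) * sSup SX) / ((1 - ε) * sInf SX) :=
        div_le_div₀ (by positivity) hP (by positivity) hp
    _ = ((1 + ε) / (1 - ε)) * (sSup SX / sInf SX) := mul_div_mul_comm _ _ _ _
end

section
/- Let M : ℝ^d → ℝ^{d1} be a linear map whose restriction to the span of vectors w1, …, wd has all singular values in [√(1−ε), √(1+ε)], with 0 ≤ ε < 1. If x0, x1, …, xd ∈ ℝ^{d0} are affinely independent points spanning (after translation by x0) that subspace, and Vol(Δ) = (1/d!)·|det[x1−x0, …, xd−x0]| denotes the simplex volume, then (1−ε)^{d/2}·Vol(Δ) ≤ Vol(Δ') ≤ (1+ε)^{d/2}·Vol(Δ), where Δ' is the image simplex with vertices M x0, …, M xd. -/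
open Matrix

/-- Volume of the simplex spanned by edge vectors `y 1, …, y d` (from a base vertex),
computed via the Gram determinant: `Vol = (1/d!) · √(det G)`, `G i j = ⟨y i, y j⟩`. -/
noncomputable def simplexVol {n d : ℕ} (y : Fin d → (Fin n → ℝ)) : ℝ :=
  (1 / (Nat.factorial d : ℝ)) * Real.sqrt ((Matrix.of fun i j => y i ⬝ᵥ y j).det)

lemma one_le_det_one_add {n : ℕ} {D : Matrix (Fin n) (Fin n) ℝ} (hD : D.PosSemidef) :
    1 ≤ (1 + D).det := by
  have hU := hD.1.spectral_theorem
  set U : Matrix (Fin n) (Fin n) ℝ := (hD.1.eigenvectorUnitary : Matrix (Fin n) (Fin n) ℝ) with hUdef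
  have hUu : U ∈ unitaryGroup (Fin n) ℝ := hD.1.eigenvectorUnitary.2
  have h1 : (1 : Matrix (Fin n) (Fin n) ℝ) = U * 1 * star U := by
    rw [mul_one]
    exact (mem_unitaryGroup_iff.mp hUu).symm
  have key : 1 + D = U * (1 + diagonal (RCLike.ofReal ∘ hD.1.eigenvalues)) * star U := by
    rw [mul_add, add_mul, ← h1]
    congr 1
  rw [key, det_mul, det_mul, mul_comm, ← mul_assoc, ← det_mul,
    mem_unitaryGroup_iff'.mp hUu, det_one, one_mul]
  have hdg : (1 : Matrix (Fin n) (Fin n) ℝ) + diagonal (RCLike.ofReal ∘ hD.1.eigenvalues)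
      = diagonal (fun i => 1 + hD.1.eigenvalues i) := by
    rw [← diagonal_one, diagonal_add]
    rfl
  rw [hdg, det_diagonal]
  calc (1:ℝ) = ∏ _i : Fin n, 1 := by simp
    _ ≤ ∏ i, (1 + hD.1.eigenvalues i) := by
        refine Finset.prod_le_prod (fun i _ => zero_le_one) fun i _ => ?_
        linarith [hD.eigenvalues_nonneg i]

open scoped MatrixOrder in
lemma det_mono {n : ℕ} {A B : Matrix (Fin n) (Fin n) ℝ} (hA : A.PosDef)
    (hBA : (B - A).PosSemidef) : A.det ≤ B.det := by
  set S := CFC.sqrt A with hSdef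
  have hS : S.PosSemidef := (CFC.sqrt_nonneg A).posSemidef
  have hSS : S * S = A := CFC.sqrt_mul_sqrt_self A hA.posSemidef.nonneg
  have hdetA : 0 < A.det := hA.det_pos
  have hdetS : S.det * S.det = A.det := by rw [← det_mul, hSS]
  have hSu : IsUnit S.det := by
    refine isUnit_iff_ne_zero.mpr fun h => ?_
    rw [h, mul_zero] at hdetS
    exact hdetA.ne' hdetS.symm
  have hSinvH : S⁻¹ᴴ = S⁻¹ := by rw [conjTranspose_nonsing_inv, hS.1]
  have hD : (S⁻¹ * (B - A) * S⁻¹).PosSemidef := by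
    have := hBA.mul_mul_conjTranspose_same S⁻¹
    rwa [hSinvH] at this
  have hmid : S * (S⁻¹ * (B - A) * S⁻¹) * S = B - A := by
    simp only [← mul_assoc]
    rw [mul_nonsing_inv _ hSu, one_mul, mul_assoc, nonsing_inv_mul _ hSu, mul_one]
  have key : B = S * (1 + S⁻¹ * (B - A) * S⁻¹) * S := by
    rw [mul_add, add_mul, mul_one, hSS, hmid]
    abel
  calc A.det = A.det * 1 := (mul_one _).symm
    _ ≤ A.det * (1 + S⁻¹ * (B - A) * S⁻¹).det :=
        mul_le_mul_of_nonneg_left (one_le_det_one_add hD) hdetA.le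
    _ = B.det := by
        nth_rewrite 2 [key]
        rw [det_mul, det_mul, ← hdetS]; ring

lemma sum3_comm {p q : ℕ} (f : Fin p → Fin p → Fin q → ℝ) :
    ∑ a, ∑ b, ∑ k, f a b k = ∑ k, ∑ a, ∑ b, f a b k :=
  calc ∑ a, ∑ b, ∑ k, f a b k
      = ∑ a, ∑ k, ∑ b, f a b k := Finset.sum_congr rfl fun _ _ => Finset.sum_comm
    _ = ∑ k, ∑ a, ∑ b, f a b k := Finset.sum_comm

lemma mulVec_sum_smul {n m d : ℕ} (M : Matrix (Fin m) (Fin n) ℝ) (y : Fin d → Fin n → ℝ)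
    (c : Fin d → ℝ) : M *ᵥ (∑ i, c i • y i) = ∑ i, c i • (M *ᵥ y i) := by
  calc M *ᵥ (∑ i, c i • y i) = M.mulVecLin (∑ i, c i • y i) := (M.mulVecLin_apply _).symm
    _ = ∑ i, c i • M.mulVecLin (y i) := by rw [map_sum]; simp
    _ = ∑ i, c i • (M *ᵥ y i) := by simp [mulVecLin_apply]

lemma quad_eq {n d : ℕ} (y : Fin d → Fin n → ℝ) (c : Fin d → ℝ) :
    c ⬝ᵥ ((Matrix.of fun i j => y i ⬝ᵥ y j) *ᵥ c) = vecNormSq (∑ i, c i • y i) := by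
  simp only [vecNormSq, dotProduct, mulVec, Matrix.of_apply, Finset.sum_apply, Pi.smul_apply,
    smul_eq_mul, pow_two, Finset.sum_mul, Finset.mul_sum]
  rw [sum3_comm (fun a b k => c a * (y a k * y b k * c b))]
  refine Finset.sum_congr rfl fun k _ => ?_
  rw [Finset.sum_comm]
  exact Finset.sum_congr rfl fun a _ => Finset.sum_congr rfl fun b _ => by ring

lemma gramH {n d : ℕ} (y : Fin d → Fin n → ℝ) :
    (Matrix.of fun i j => y i ⬝ᵥ y j).IsHermitian := by
  ext i j
  simp [Matrix.conjTranspose_apply, dotProduct_comm]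

/-- If `M`'s restriction to the span of the edge vectors has all singular
values in `[√(1−ε), √(1+ε)]` (equivalently `(1−ε)‖w‖² ≤ ‖Mw‖² ≤ (1+ε)‖w‖²` on the span),
and `x0, …, xd` are affinely independent, then
`(1−ε)^{d/2}·Vol(Δ) ≤ Vol(Δ') ≤ (1+ε)^{d/2}·Vol(Δ)`. -/
theorem simplex_volume_distortion (d0 d1 d : ℕ) (ε : ℝ) (hε0 : 0 ≤ ε) (hε1 : ε < 1)
    (M : Matrix (Fin d1) (Fin d0) ℝ)
    (x : Fin (d + 1) → (Fin d0 → ℝ))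
    (hindep : LinearIndependent ℝ (fun i : Fin d => x i.succ - x 0))
    (hiso : ∀ w ∈ Submodule.span ℝ (Set.range fun i : Fin d => x i.succ - x 0),
      (1 - ε) * vecNormSq w ≤ vecNormSq (M.mulVec w) ∧
        vecNormSq (M.mulVec w) ≤ (1 + ε) * vecNormSq w) :
    (1 - ε) ^ ((d : ℝ) / 2) * simplexVol (fun i : Fin d => x i.succ - x 0) ≤
        simplexVol (fun i : Fin d => M.mulVec (x i.succ) - M.mulVec (x 0)) ∧
      simplexVol (fun i : Fin d => M.mulVec (x i.succ) - M.mulVec (x 0)) ≤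
        (1 + ε) ^ ((d : ℝ) / 2) * simplexVol (fun i : Fin d => x i.succ - x 0) := by
  have h1 : (0:ℝ) < 1 - ε := by linarith
  have h2 : (0:ℝ) < 1 + ε := by linarith
  set y : Fin d → Fin d0 → ℝ := fun i => x i.succ - x 0 with hy
  have himg : (fun i : Fin d => M.mulVec (x i.succ) - M.mulVec (x 0)) = fun i => M *ᵥ y i := by
    funext i
    rw [hy, Matrix.mulVec_sub]
  rw [himg]
  set G : Matrix (Fin d) (Fin d) ℝ := Matrix.of fun i j => y i ⬝ᵥ y j with hG
  set G' : Matrix (Fin d) (Fin d) ℝ := Matrix.of fun i j => (M *ᵥ y i) ⬝ᵥ (M *ᵥ y j) with hG'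
  -- quadratic forms
  have qG : ∀ c : Fin d → ℝ, c ⬝ᵥ (G *ᵥ c) = vecNormSq (∑ i, c i • y i) := fun c => quad_eq y c
  have qG' : ∀ c : Fin d → ℝ, c ⬝ᵥ (G' *ᵥ c) = vecNormSq (M *ᵥ (∑ i, c i • y i)) := by
    intro c
    rw [hG', quad_eq (fun i => M *ᵥ y i) c, mulVec_sum_smul]
  have hmem : ∀ c : Fin d → ℝ,
      (∑ i, c i • y i) ∈ Submodule.span ℝ (Set.range fun i : Fin d => x i.succ - x 0) :=
    fun c => Submodule.sum_mem _ fun i _ =>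
      Submodule.smul_mem _ _ (Submodule.subset_span ⟨i, rfl⟩)
  have hGH : G.IsHermitian := gramH y
  have hsmulH : ∀ a : ℝ, (a • G).IsHermitian := fun a => by
    show (a • G)ᴴ = a • G
    rw [conjTranspose_smul, hGH.eq]
    simp
  have hG'H : G'.IsHermitian := gramH (fun i => M *ᵥ y i)
  have hstar : ∀ c : Fin d → ℝ, star c = c := fun c => by
    funext i; simp
  -- nonzero combinations
  have hne : ∀ c : Fin d → ℝ, c ≠ 0 → (∑ i, c i • y i) ≠ 0 := by
    intro c hc h0
    exact hc (funext fun i => Fintype.linearIndependent_iff.mp hindep c h0 i)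
  have hGpd : G.PosDef := by
    refine Matrix.PosDef.of_dotProduct_mulVec_pos hGH fun c hc => ?_
    rw [hstar, qG]
    exact vecNormSq_pos (hne c hc)
  have hG'pd : G'.PosDef := by
    refine Matrix.PosDef.of_dotProduct_mulVec_pos hG'H fun c hc => ?_
    rw [hstar, qG']
    have := (hiso _ (hmem c)).1
    have hw := vecNormSq_pos (hne c hc)
    nlinarith
  have hsGpd : ((1 - ε) • G).PosDef := by
    refine Matrix.PosDef.of_dotProduct_mulVec_pos (hsmulH _) fun c hc => ?_
    rw [hstar, smul_mulVec, dotProduct_smul, smul_eq_mul, qG]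
    exact mul_pos h1 (vecNormSq_pos (hne c hc))
  have hlowPSD : (G' - (1 - ε) • G).PosSemidef := by
    refine Matrix.PosSemidef.of_dotProduct_mulVec_nonneg (hG'H.sub (hsmulH _)) fun c => ?_
    rw [hstar, sub_mulVec, dotProduct_sub, smul_mulVec, dotProduct_smul, smul_eq_mul,
      qG, qG']
    have := (hiso _ (hmem c)).1
    linarith
  have hupPSD : ((1 + ε) • G - G').PosSemidef := by
    refine Matrix.PosSemidef.of_dotProduct_mulVec_nonneg ((hsmulH _).sub hG'H) fun c => ?_
    rw [hstar, sub_mulVec, dotProduct_sub, smul_mulVec, dotProduct_smul, smul_eq_mul,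
      qG, qG']
    have := (hiso _ (hmem c)).2
    linarith
  have hlow : (1 - ε) ^ d * G.det ≤ G'.det := by
    have := det_mono hsGpd hlowPSD
    rwa [det_smul, Fintype.card_fin] at this
  have hup : G'.det ≤ (1 + ε) ^ d * G.det := by
    have := det_mono hG'pd hupPSD
    rwa [det_smul, Fintype.card_fin] at this
  have hdetG : 0 ≤ G.det := hGpd.det_pos.le
  have hfac : (0:ℝ) ≤ 1 / (Nat.factorial d : ℝ) := by positivity
  have hr : ∀ a : ℝ, 0 ≤ a → a ^ ((d : ℝ) / 2) = Real.sqrt (a ^ d) := by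
    intro a ha
    rw [Real.sqrt_eq_rpow, ← Real.rpow_natCast a d, ← Real.rpow_mul ha, mul_one_div]
  simp only [simplexVol, ← hG, ← hG']
  constructor
  · rw [hr _ h1.le]
    have he : Real.sqrt ((1 - ε) ^ d) * (1 / (Nat.factorial d : ℝ) * Real.sqrt G.det)
        = 1 / (Nat.factorial d : ℝ) * Real.sqrt ((1 - ε) ^ d * G.det) := by
      rw [Real.sqrt_mul (by positivity)]; ring
    rw [he]
    exact mul_le_mul_of_nonneg_left (Real.sqrt_le_sqrt hlow) hfac
  · rw [hr _ h2.le]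
    have he : Real.sqrt ((1 + ε) ^ d) * (1 / (Nat.factorial d : ℝ) * Real.sqrt G.det)
        = 1 / (Nat.factorial d : ℝ) * Real.sqrt ((1 + ε) ^ d * G.det) := by
      rw [Real.sqrt_mul (by positivity)]; ring
    rw [he]
    exact mul_le_mul_of_nonneg_left (Real.sqrt_le_sqrt hup) hfac
end
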